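/- arXiv:2512.19076 — 5 statements merged into one kernel-verified Lean document; each statement's English description precedes it below -/
import Mathlib

section
/- Let h ∈ ℤ[x₁,…,xₙ] be a polynomial that is the sum of at most w monomials, let X₁,…,Xₙ > 0 and M > 0 be integers, and let (y₁,…,yₙ) ∈ ℤⁿ. Suppose (1) h(y₁,…,yₙ) ≡ 0 (mod M) and |yᵢ| < Xᵢ for all 1 ≤ i ≤ n, and (2) the Euclidean norm of the coefficient vector of h(x₁X₁,…,xₙXₙ), i.e. the square root of the sum over all monomials x₁^{e₁}⋯xₙ^{eₙ} in the support of h of (coeff(h, e)·X₁^{e₁}⋯Xₙ^{eₙ})², is strictly less than M/√w. Then h(y₁,…,yₙ) = 0 in ℤ. -/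
/-!
An integer that is divisible by `M` and has absolute value less than `M` is zero. On the box
`|yᵢ| < Xᵢ` each monomial of `h` is bounded by the corresponding coefficient of
`h(x₁X₁, …, xₙXₙ)`, so `|h(y)|` is at most the `ℓ¹`-norm of that coefficient vector, which by
Cauchy–Schwarz is at most `√w` times its `ℓ²`-norm, hence less than `M`.
-/

open Finset

theorem Finset.sum_le_sqrt_card_mul_sqrt_sum_sq {ι : Type*} (s : Finset ι) (f : ι → ℝ) :
    ∑ i ∈ s, f i ≤ √(#s : ℝ) * √(∑ i ∈ s, f i ^ 2) := by
  rw [← Real.sqrt_mul (Nat.cast_nonneg _)]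
  exact (le_abs_self _).trans (Real.abs_le_sqrt sq_sum_le_card_mul_sum_sq)

theorem MvPolynomial.abs_eval_le_sum_abs_coeff_mul_prod {σ R : Type*} [Fintype σ] [CommRing R]
    [LinearOrder R] [IsStrictOrderedRing R] (p : MvPolynomial σ R) (y X : σ → R)
    (hyX : ∀ i, |y i| ≤ X i) :
    |eval y p| ≤ ∑ e ∈ p.support, |p.coeff e| * ∏ i, X i ^ e i := by
  rw [eval_eq']
  refine (abs_sum_le_sum_abs _ _).trans (sum_le_sum fun e _ => ?_)
  rw [abs_mul, abs_prod]
  gcongr with i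
  rw [abs_pow]
  exact pow_le_pow_left₀ (abs_nonneg _) (hyX i) _

theorem howgrave_graham_general (n w : ℕ) (h : MvPolynomial (Fin n) ℤ)
    (hw : h.support.card ≤ w)
    (X : Fin n → ℤ) (M : ℤ)
    (y : Fin n → ℤ)
    (h1 : M ∣ MvPolynomial.eval y h)
    (h2 : ∀ i, |y i| < X i)
    (h3 : Real.sqrt (∑ e ∈ h.support,
            (((h.coeff e : ℤ) : ℝ) * ∏ i, (X i : ℝ) ^ (e i)) ^ 2)
          < (M : ℝ) / Real.sqrt w) :
    MvPolynomial.eval y h = 0 := by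
  have hw_pos : 0 < √(w : ℝ) := by
    refine (Real.sqrt_nonneg _).lt_of_ne fun hw0 => ?_
    rw [← hw0, div_zero] at h3
    exact (Real.sqrt_nonneg _).not_gt h3
  have hbound := MvPolynomial.abs_eval_le_sum_abs_coeff_mul_prod h y X fun i => (h2 i).le
  refine Int.eq_zero_of_abs_lt_dvd h1 ?_
  have : ((|MvPolynomial.eval y h| : ℤ) : ℝ) < M := calc
    _ ≤ ∑ e ∈ h.support, |((h.coeff e : ℤ) : ℝ)| * ∏ i, (X i : ℝ) ^ e i := by exact_mod_cast hbound
    _ ≤ √(#h.support : ℝ) *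
          √(∑ e ∈ h.support, (((h.coeff e : ℤ) : ℝ) * ∏ i, (X i : ℝ) ^ e i) ^ 2) := by
      convert sum_le_sqrt_card_mul_sqrt_sum_sq h.support _ using 4 with e
      rw [mul_pow, mul_pow, sq_abs]
    _ ≤ √(w : ℝ) * _ :=
      mul_le_mul_of_nonneg_right (Real.sqrt_le_sqrt (by exact_mod_cast hw)) (Real.sqrt_nonneg _)
    _ < M := (lt_div_iff₀' hw_pos).1 h3
  exact_mod_cast this

/-- Howgrave-Graham's lemma: if a multivariate integer polynomial `h` with at most `w`
monomials vanishes modulo `M` at a point `y` with `|y i| < X i`, and the Euclidean norm of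
the coefficient vector of `h (x₁X₁, …, xₙXₙ)` is less than `M / √w`, then `h(y) = 0` in `ℤ`. -/
theorem howgrave_graham (n w : ℕ) (h : MvPolynomial (Fin n) ℤ)
    (hw : h.support.card ≤ w)
    (X : Fin n → ℤ) (hX : ∀ i, 0 < X i) (M : ℤ) (hM : 0 < M)
    (y : Fin n → ℤ)
    (h1 : M ∣ MvPolynomial.eval y h)
    (h2 : ∀ i, |y i| < X i)
    (h3 : Real.sqrt (∑ e ∈ h.support,
            (((h.coeff e : ℤ) : ℝ) * ∏ i, (X i : ℝ) ^ (e i)) ^ 2)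
          < (M : ℝ) / Real.sqrt w) :
    MvPolynomial.eval y h = 0 :=
  howgrave_graham_general n w h hw X M y h1 h2 h3
end

section
/- Let N, m, j be positive integers with gcd(j,m) = 1, 1 ≤ j ≤ m, gcd(m,N) = 1, and let β be a real number with 1/3 ≤ β ≤ 1/2 and 72 < m < N^{(1−β)/2}/2. Let minv be an integer with m·minv ≡ 1 (mod N), set t = (m·minv − 1)/N, p̃ = j·minv, and X = ⌊N^β/m⌋. Let L ⊆ ℤ³ be the lattice generated by the rows (N, 0, 0), (p̃, X, 0), (p̃², 2p̃X, X²). Then v₀ := (j, mX, 0) satisfies v₀ = −tj·(N,0,0) + m·(p̃, X, 0), so v₀ ∈ L, and every nonzero vector v ∈ L with ‖v‖ ≤ ‖v₀‖ is an integer multiple of v₀; in particular, v₀ is a shortest nonzero vector of L. -/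
/-!
A vector `(u, B X, c X²)` of the lattice is the coefficient vector of a polynomial
`g = u + B x + c x²` which vanishes modulo `N` at `x = -p̃`, and `-p̃ ≡ -j/m (mod N)`; hence
`N ∣ m² g(-j/m) = m² u - m j B + j² c`. A vector no longer than `v₀` has coordinates so small that
`|m² g(-j/m)| < N`, so `g(-j/m) = 0`. Coprimality of `j` and `m` then forces `m ∣ c`, hence `c = 0`
by size, and then `g = k (j + m x)`, i.e. `v = k v₀`.
-/

/-- `m² g(-j/m)` for the polynomial `g = u + B x + c x²`. -/
def homEval (m j u B c : ℤ) : ℤ := m ^ 2 * u - m * j * B + j ^ 2 * c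

lemma exists_coords_of_mem_span {N m j p X : ℤ} (hp : N ∣ m * p - j) {v : Fin 3 → ℤ}
    (hv : v ∈ Submodule.span ℤ
      ({![N, 0, 0], ![p, X, 0], ![p ^ 2, 2 * p * X, X ^ 2]} : Set (Fin 3 → ℤ))) :
    ∃ u B c : ℤ, v = ![u, B * X, c * X ^ 2] ∧ N ∣ homEval m j u B c := by
  obtain ⟨a, b, c, rfl⟩ := Submodule.mem_span_triple.mp hv
  obtain ⟨q, hq⟩ := hp
  refine ⟨a * N + b * p + c * p ^ 2, b + 2 * c * p, c, ?_,
    m ^ 2 * a + m * b * q + c * q ^ 2 * N, ?_⟩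
  · simp only [Matrix.smul_vec3, Matrix.vec3_add, smul_eq_mul]
    exact Matrix.vec3_eq (by ring) (by ring) (by ring)
  · unfold homEval
    linear_combination (m * b + c * (m * p - j + N * q)) * hq

lemma abs_coords_le_of_sq_norm_le {m j X u B c : ℤ} (hm : 0 < m) (hj : |j| ≤ m) (hX : 2 ≤ X)
    (hnorm : u ^ 2 + (B * X) ^ 2 + (c * X ^ 2) ^ 2 ≤ j ^ 2 + (m * X) ^ 2) :
    |u| ≤ m * (X + 1) ∧ |B| ≤ 2 * m ∧ |c| < m := by
  have hj2 : j ^ 2 ≤ m ^ 2 := sq_le_sq' (abs_le.mp hj).1 (abs_le.mp hj).2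
  have hX2 : 4 ≤ X ^ 2 := by nlinarith
  have hv₀ : j ^ 2 + (m * X) ^ 2 ≤ m ^ 2 * (1 + X ^ 2) := by nlinarith
  refine ⟨abs_le_of_sq_le_sq ?_ (by positivity), abs_le_of_sq_le_sq ?_ (by positivity),
    abs_lt_of_sq_lt_sq ?_ hm.le⟩
  · nlinarith
  · have : B ^ 2 * X ^ 2 ≤ (2 * m) ^ 2 * X ^ 2 := by nlinarith
    exact le_of_mul_le_mul_right this (by positivity)
  · have : c ^ 2 * (X ^ 2) ^ 2 < m ^ 2 * (X ^ 2) ^ 2 := by nlinarith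
    exact lt_of_mul_lt_mul_right this (by positivity)

lemma abs_homEval_le {m j X u B c : ℤ} (hj : |j| ≤ m) (hu : |u| ≤ m * (X + 1))
    (hB : |B| ≤ 2 * m) (hc : |c| ≤ m) :
    |homEval m j u B c| ≤ m ^ 3 * (X + 4) := by
  have hm : 0 ≤ m := (abs_nonneg j).trans hj
  calc |homEval m j u B c| ≤ m ^ 2 * |u| + m * |j| * |B| + |j| ^ 2 * |c| := by
        unfold homEval
        refine (abs_add_le _ _).trans (add_le_add ((abs_sub _ _).trans_eq ?_) ?_) <;>
          simp [abs_mul, abs_pow, abs_of_nonneg hm]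
    _ ≤ m ^ 2 * (m * (X + 1)) + m * m * (2 * m) + m ^ 2 * m := by gcongr
    _ = m ^ 3 * (X + 4) := by ring

lemma eq_mul_of_homEval_eq_zero {m j u B c : ℤ} (hm : 0 < m) (hco : IsCoprime m j)
    (h : homEval m j u B c = 0) (hc : |c| < m) : c = 0 ∧ ∃ k, u = j * k ∧ B = m * k := by
  unfold homEval at h
  have hc0 : c = 0 :=
    Int.eq_zero_of_abs_lt_dvd ((hco.pow_right (n := 2)).dvd_of_dvd_mul_left
      ⟨j * B - m * u, by linear_combination h⟩) hc
  subst hc0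
  have hmu : m * u = j * B := mul_left_cancel₀ hm.ne' (by linear_combination h)
  obtain ⟨k, rfl⟩ := hco.dvd_of_dvd_mul_left ⟨u, hmu.symm⟩
  exact ⟨rfl, k, mul_left_cancel₀ hm.ne' (by linear_combination hmu), rfl⟩

lemma sum_sq_le_of_sqrt_sum_sq_le {ι : Type*} [Fintype ι] {v w : ι → ℤ}
    (h : √(∑ i, (v i : ℝ) ^ 2) ≤ √(∑ i, (w i : ℝ) ^ 2)) : ∑ i, v i ^ 2 ≤ ∑ i, w i ^ 2 := by
  exact_mod_cast (Real.sqrt_le_sqrt_iff (by positivity)).mp h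

lemma two_mul_lt_rpow {N m β : ℝ} (hN : 1 ≤ N) (hβ : 1 / 3 ≤ β)
    (hmN : m < N ^ ((1 - β) / 2) / 2) : 2 * m < N ^ β := by
  have : N ^ ((1 - β) / 2) ≤ N ^ β := Real.rpow_le_rpow_of_exponent_le hN (by linarith)
  linarith

lemma sq_mul_rpow_add_four_mul_cube_lt {N m β : ℝ} (hN : 1 ≤ N) (hβ : 1 / 3 ≤ β) (hm : 0 ≤ m)
    (hmN : m < N ^ ((1 - β) / 2) / 2) : m ^ 2 * N ^ β + 4 * m ^ 3 < N := by
  set A := N ^ ((1 - β) / 2)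
  have hN0 : 0 ≤ N := by linarith
  have hA : 0 ≤ A := Real.rpow_nonneg hN0 _
  have hA2 : A ^ 2 * N ^ β = N := by
    rw [← Real.rpow_natCast, ← Real.rpow_mul hN0, ← Real.rpow_add (by linarith)]
    norm_num
  have hA3 : A ^ 3 ≤ N := by
    rw [← Real.rpow_natCast, ← Real.rpow_mul hN0]
    exact (Real.rpow_le_rpow_of_exponent_le hN (by push_cast; linarith)).trans_eq (Real.rpow_one N)
  have hNβ : 0 < N ^ β := Real.rpow_pos_of_pos (by linarith) _
  have hm2 : m ^ 2 < A ^ 2 / 4 := by nlinarith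
  have hm3 : m ^ 3 < A ^ 3 / 8 := by nlinarith
  nlinarith

lemma floor_rpow_div_bounds {N m : ℤ} {β : ℝ} (hN : 0 < N) (hm : 0 < m) (hβ : 1 / 3 ≤ β)
    (hmN : (m : ℝ) < (N : ℝ) ^ ((1 - β) / 2) / 2) :
    2 ≤ ⌊(N : ℝ) ^ β / m⌋ ∧ m ^ 3 * (⌊(N : ℝ) ^ β / m⌋ + 4) < N := by
  have hN1 : (1 : ℝ) ≤ N := by exact_mod_cast hN
  have hm0 : (0 : ℝ) < m := by exact_mod_cast hm
  refine ⟨?_, ?_⟩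
  · rw [Int.le_floor, le_div_iff₀ hm0]
    push_cast
    linarith [two_mul_lt_rpow hN1 hβ hmN]
  · have hfloor : (m : ℝ) * ⌊(N : ℝ) ^ β / m⌋ ≤ (N : ℝ) ^ β :=
      (le_div_iff₀' hm0).mp (Int.floor_le _)
    have := sq_mul_rpow_add_four_mul_cube_lt hN1 hβ hm0.le hmN
    have : (m : ℝ) ^ 3 * (⌊(N : ℝ) ^ β / m⌋ + 4) < N := by nlinarith
    exact_mod_cast this

theorem shortest_vector_rank3_lattice_general
    (N m j minv t X : ℤ) (β : ℝ)
    (hN : 0 < N) (hm : 0 < m) (hj1 : 1 ≤ j) (hjm : j ≤ m)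
    (hgcdjm : Int.gcd j m = 1)
    (hβl : 1 / 3 ≤ β)
    (hmupper : (m : ℝ) < (N : ℝ) ^ ((1 - β) / 2) / 2)
    (hminv : m * minv = 1 + t * N)
    (hX : X = ⌊(N : ℝ) ^ β / (m : ℝ)⌋) :
    (![j, m * X, 0] : Fin 3 → ℤ) =
        (-(t * j)) • (![N, 0, 0] : Fin 3 → ℤ) + m • ![j * minv, X, 0] ∧
    (![j, m * X, 0] : Fin 3 → ℤ) ∈ Submodule.span ℤ
        ({![N, 0, 0], ![j * minv, X, 0],
          ![(j * minv) ^ 2, 2 * (j * minv) * X, X ^ 2]} : Set (Fin 3 → ℤ)) ∧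
    ∀ v ∈ Submodule.span ℤ
        ({![N, 0, 0], ![j * minv, X, 0],
          ![(j * minv) ^ 2, 2 * (j * minv) * X, X ^ 2]} : Set (Fin 3 → ℤ)),
      v ≠ 0 →
      Real.sqrt (∑ i, ((v i : ℤ) : ℝ) ^ 2) ≤
        Real.sqrt (∑ i, (((![j, m * X, 0] : Fin 3 → ℤ) i : ℤ) : ℝ) ^ 2) →
      ∃ k : ℤ, v = k • (![j, m * X, 0] : Fin 3 → ℤ) := by
  have hv₀ : (![j, m * X, 0] : Fin 3 → ℤ) =
      (-(t * j)) • (![N, 0, 0] : Fin 3 → ℤ) + m • ![j * minv, X, 0] := by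
    simp only [Matrix.smul_vec3, Matrix.vec3_add, smul_eq_mul]
    exact Matrix.vec3_eq (by linear_combination -j * hminv) (by ring) (by ring)
  refine ⟨hv₀, hv₀ ▸ add_mem (Submodule.smul_mem _ _ (Submodule.subset_span (by simp)))
    (Submodule.smul_mem _ _ (Submodule.subset_span (by simp))), ?_⟩
  intro v hv _ hnorm
  obtain ⟨hX2, hXN⟩ := floor_rpow_div_bounds hN hm hβl hmupper
  rw [← hX] at hX2 hXN
  have hp : N ∣ m * (j * minv) - j := ⟨t * j, by linear_combination j * hminv⟩
  obtain ⟨u, B, c, rfl, hdvd⟩ := exists_coords_of_mem_span hp hv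
  have hsq := sum_sq_le_of_sqrt_sum_sq_le hnorm
  simp only [Fin.sum_univ_three, Matrix.cons_val_zero, Matrix.cons_val_one, Matrix.cons_val_two,
    Matrix.head_cons, Matrix.tail_cons] at hsq
  have hj : |j| ≤ m := abs_le.mpr ⟨by linarith, hjm⟩
  obtain ⟨hu, hB, hc⟩ := abs_coords_le_of_sq_norm_le hm hj hX2 (hsq.trans_eq (by ring))
  have hE := Int.eq_zero_of_abs_lt_dvd hdvd ((abs_homEval_le hj hu hB hc.le).trans_lt hXN)
  have hco : IsCoprime m j := Int.isCoprime_iff_gcd_eq_one.mpr (by rwa [Int.gcd_comm])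
  obtain ⟨rfl, k, huk, hBk⟩ := eq_mul_of_homEval_eq_zero hm hco hE hc
  refine ⟨k, ?_⟩
  rw [Matrix.smul_vec3, huk, hBk]
  exact Matrix.vec3_eq (mul_comm _ _) (by ring) (by ring)

/-- The shortest-vector part of Lemma 4.4: in the rank-3 lattice generated by the rows
`(N,0,0)`, `(p̃, X, 0)`, `(p̃², 2p̃X, X²)` with `p̃ = j·minv`, `X = ⌊N^β/m⌋`, the vector
`v₀ = (j, mX, 0)` lies in the lattice (explicitly `v₀ = −tj·(N,0,0) + m·(p̃,X,0)`), and every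
nonzero lattice vector of Euclidean norm at most `‖v₀‖` is an integer multiple of `v₀`. -/
theorem shortest_vector_rank3_lattice
    (N m j minv t X : ℤ) (β : ℝ)
    (hN : 0 < N) (hm : 0 < m) (hj1 : 1 ≤ j) (hjm : j ≤ m)
    (hgcdjm : Int.gcd j m = 1) (hgcdmN : Int.gcd m N = 1)
    (hβl : 1 / 3 ≤ β) (hβu : β ≤ 1 / 2)
    (hm72 : 72 < m) (hmupper : (m : ℝ) < (N : ℝ) ^ ((1 - β) / 2) / 2)
    (hminv : m * minv = 1 + t * N)
    (hX : X = ⌊(N : ℝ) ^ β / (m : ℝ)⌋) :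
    (![j, m * X, 0] : Fin 3 → ℤ) =
        (-(t * j)) • (![N, 0, 0] : Fin 3 → ℤ) + m • ![j * minv, X, 0] ∧
    (![j, m * X, 0] : Fin 3 → ℤ) ∈ Submodule.span ℤ
        ({![N, 0, 0], ![j * minv, X, 0],
          ![(j * minv) ^ 2, 2 * (j * minv) * X, X ^ 2]} : Set (Fin 3 → ℤ)) ∧
    ∀ v ∈ Submodule.span ℤ
        ({![N, 0, 0], ![j * minv, X, 0],
          ![(j * minv) ^ 2, 2 * (j * minv) * X, X ^ 2]} : Set (Fin 3 → ℤ)),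
      v ≠ 0 →
      Real.sqrt (∑ i, ((v i : ℤ) : ℝ) ^ 2) ≤
        Real.sqrt (∑ i, (((![j, m * X, 0] : Fin 3 → ℤ) i : ℤ) : ℝ) ^ 2) →
      ∃ k : ℤ, v = k • (![j, m * X, 0] : Fin 3 → ℤ) :=
  shortest_vector_rank3_lattice_general N m j minv t X β hN hm hj1 hjm hgcdjm hβl hmupper hminv hX
end

section
/- Let N, m, j be positive integers with gcd(j,m) = 1, 1 ≤ j ≤ m, gcd(m,N) = 1, and let β be a real number with 1/3 ≤ β ≤ 1/2 and 72 < m < N^{(1−β)/2}/2. Let minv be an integer with m·minv ≡ 1 (mod N), p̃ = j·minv, and X = ⌊N^β/m⌋. Let L ⊆ ℤ³ be the lattice generated by the rows (N, 0, 0), (p̃, X, 0), (p̃², 2p̃X, X²). Then every vector v ∈ L whose third coordinate is zero and which satisfies ‖v‖ < 2·3^{3/4}·N^{1/2+β}/m^{3/2} is an integer multiple of (j, mX, 0). In particular, any vector of L that is linearly independent from (j, mX, 0) and has Euclidean norm less than 2·3^{3/4}·N^{1/2+β}/m^{3/2} has nonzero third coordinate. -/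
open Finset

/-!
A lattice vector with zero third coordinate is `(a N + b p̃, b X, 0)`. Since `m p̃ ≡ j (mod N)`,
its first coordinate `y` satisfies `m y ≡ b j (mod N)`. When the vector is short, both `|y|` and
`|b|` are small enough that `|m y - b j| < N`, so `m y = b j`; as `gcd(j, m) = 1` this forces
`b = m k` and `y = k j`, i.e. the vector is `k (j, m X, 0)`. Since `|b| X` is below the norm
bound `B`, the analytic input is `m B + m B / X < N`, and this is where `β ∈ [1/3, 1/2]`,
`X > N^β / (2m)` and `72 < m < N^((1-β)/2) / 2` are used.
-/

lemma abs_le_sqrt_sum_sq {ι : Type*} [Fintype ι] (x : ι → ℝ) (i : ι) :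
    |x i| ≤ √(∑ j, x j ^ 2) :=
  Real.abs_le_sqrt (single_le_sum (fun j _ ↦ sq_nonneg (x j)) (mem_univ i))

lemma lt_two_mul_mul_floor_div {A m : ℝ} (hm : 0 < m) (hmA : m ≤ A) : A < 2 * m * ⌊A / m⌋ := by
  have h1 : (1 : ℝ) ≤ ⌊A / m⌋ := by
    exact_mod_cast Int.le_floor.mpr (by simpa [one_le_div hm] using hmA)
  have h2 : A / m < 2 * ⌊A / m⌋ := by linarith [Int.lt_floor_add_one (A / m)]
  rwa [div_lt_iff₀ hm, mul_comm, ← mul_assoc, mul_comm m] at h2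

lemma rpow_three_quarters_lt : (3 : ℝ) ^ ((3 : ℝ) / 4) < 7 / 3 := by
  refine lt_of_pow_lt_pow_left₀ 4 (by norm_num) ?_
  rw [← Real.rpow_natCast, ← Real.rpow_mul (by norm_num)]
  norm_num

lemma one_le_of_one_lt_rpow {N e : ℝ} (hN : 0 < N) (he : 0 ≤ e) (h : 1 < N ^ e) : 1 ≤ N := by
  by_contra! hN1
  linarith [Real.rpow_le_one hN.le hN1.le he]

lemma exists_eq_of_mem_span_of_apply_two_eq_zero {N p X : ℤ} (hX : X ≠ 0) {v : Fin 3 → ℤ}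
    (hv : v ∈ Submodule.span ℤ
      ({![N, 0, 0], ![p, X, 0], ![p ^ 2, 2 * p * X, X ^ 2]} : Set (Fin 3 → ℤ)))
    (hv2 : v 2 = 0) : ∃ a b : ℤ, v = ![a * N + b * p, b * X, 0] := by
  obtain ⟨a, b, c, rfl⟩ := Submodule.mem_span_triple.mp hv
  have hc : c = 0 := by simpa [hX] using hv2
  subst hc
  exact ⟨a, b, by ext i; fin_cases i <;> simp [mul_comm]⟩

lemma exists_eq_mul_of_dvd_of_abs_lt {N m j y b : ℤ} (hmj : IsCoprime m j) (hm : m ≠ 0)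
    (hdvd : N ∣ m * y - b * j) (hlt : |m * y - b * j| < N) : ∃ k, y = k * j ∧ b = m * k := by
  have hmy : m * y = b * j := sub_eq_zero.mp (Int.eq_zero_of_abs_lt_dvd hdvd hlt)
  obtain ⟨k, rfl⟩ : m ∣ b := hmj.dvd_of_dvd_mul_right ⟨y, hmy.symm⟩
  exact ⟨k, mul_left_cancel₀ hm (by rw [hmy]; ring), rfl⟩

lemma exists_eq_smul_of_sqrt_sum_sq_lt {N m j minv t X : ℤ} {B : ℝ} (hm : 0 < m) (hj0 : 0 ≤ j)
    (hjm : j ≤ m) (hmj : IsCoprime m j) (hminv : m * minv = 1 + t * N) (hX : 0 < X)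
    (hB : m * B + m * B / X ≤ N) {v : Fin 3 → ℤ}
    (hv : v ∈ Submodule.span ℤ ({![N, 0, 0], ![j * minv, X, 0],
      ![(j * minv) ^ 2, 2 * (j * minv) * X, X ^ 2]} : Set (Fin 3 → ℤ)))
    (hv2 : v 2 = 0) (hnorm : √(∑ i, ((v i : ℤ) : ℝ) ^ 2) < B) :
    ∃ k : ℤ, v = k • ![j, m * X, 0] := by
  obtain ⟨a, b, rfl⟩ := exists_eq_of_mem_span_of_apply_two_eq_zero hX.ne' hv hv2
  set y := a * N + b * (j * minv)
  have hX' : (0 : ℝ) < X := Int.cast_pos.mpr hX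
  have hm' : (0 : ℝ) < m := Int.cast_pos.mpr hm
  have hy : |(y : ℝ)| < B := by
    simpa using (abs_le_sqrt_sum_sq (fun i ↦ ((![y, b * X, 0] i : ℤ) : ℝ)) 0).trans_lt hnorm
  have hbX : |(b : ℝ)| * X < B := by
    have := (abs_le_sqrt_sum_sq (fun i ↦ ((![y, b * X, 0] i : ℤ) : ℝ)) 1).trans_lt hnorm
    simpa [abs_mul, abs_of_pos hX'] using this
  have hbm : |(b : ℝ)| * m < m * B / X := by
    rw [lt_div_iff₀ hX']; nlinarith
  have hlt : |m * y - b * j| < N := by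
    have hbj : |(b : ℝ) * j| ≤ |(b : ℝ)| * m := by
      rw [abs_mul, abs_of_nonneg (Int.cast_nonneg_iff.mpr hj0)]
      exact mul_le_mul_of_nonneg_left (Int.cast_le.mpr hjm) (abs_nonneg _)
    have : |(m : ℝ) * y - b * j| < N := calc
      |(m : ℝ) * y - b * j| ≤ m * |(y : ℝ)| + |(b : ℝ) * j| := by
        simpa [abs_mul, abs_of_pos hm'] using abs_sub (m * (y : ℝ)) (b * j)
      _ < m * B + m * B / X := by nlinarith
      _ ≤ N := hB
    exact_mod_cast this
  have hdvd : N ∣ m * y - b * j := ⟨a * m + b * j * t, by linear_combination (b * j) * hminv⟩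
  obtain ⟨k, hyk, rfl⟩ := exists_eq_mul_of_dvd_of_abs_lt hmj hm.ne' hdvd hlt
  exact ⟨k, by ext i; fin_cases i <;> simp [hyk, mul_assoc, mul_left_comm]⟩

lemma cube_div_add_mul_lt_sq {K s a y : ℝ} (hK : K < 7 / 3) (hs : 8 < s) (ha : 0 < a)
    (hsy : 2 * s ^ 2 < y) (hya : y ≤ a ^ 2) (hay : a ≤ y) :
    2 * K * y * a ^ 3 / s + 4 * K * y * a * s < (y * a) ^ 2 := by
  have hsa : s < a := by nlinarith
  have h1 : 2 * K * a ^ 2 / s < 7 / 12 * (y * a) := by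
    rw [div_lt_iff₀ (by linarith)]
    nlinarith [mul_le_mul_of_nonneg_left hay ha.le]
  have h2 : 4 * K * s < 5 / 12 * (y * a) := by nlinarith
  have hsum : 2 * K * a ^ 2 / s + 4 * K * s < y * a := by linarith
  calc 2 * K * y * a ^ 3 / s + 4 * K * y * a * s
      = (y * a) * (2 * K * a ^ 2 / s + 4 * K * s) := by ring
    _ < (y * a) * (y * a) := mul_lt_mul_of_pos_left hsum (mul_pos (by nlinarith) ha)
    _ = (y * a) ^ 2 := by ring

noncomputable def normBound (N m β : ℝ) : ℝ :=
  2 * 3 ^ ((3 : ℝ) / 4) * N ^ (1 / 2 + β) / m ^ ((3 : ℝ) / 2)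

lemma mul_normBound_add_div_lt {N m β X : ℝ} (hN1 : 1 ≤ N) (hm : 72 < m) (hβl : 1 / 3 ≤ β)
    (hβu : β ≤ 1 / 2) (hmN : m < N ^ ((1 - β) / 2) / 2) (hX : N ^ β < 2 * m * X) :
    m * normBound N m β + m * normBound N m β / X < N := by
  have hN : 0 < N := by linarith
  -- With these three roots, every power of `N` and `m` in the bound becomes a monomial.
  set s := √m with hs_def
  set a := N ^ (β / 2) with ha_def
  set y := N ^ ((1 - β) / 2) with hy_def
  set K : ℝ := 3 ^ ((3 : ℝ) / 4) with hK_def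
  have hpow (e : ℝ) (n : ℕ) : (N ^ e) ^ n = N ^ (e * n) := by
    rw [← Real.rpow_natCast, ← Real.rpow_mul hN.le]
  have hm_eq : m = s ^ 2 := (Real.sq_sqrt (by linarith)).symm
  have hm32 : m ^ ((3 : ℝ) / 2) = s ^ 3 := by
    rw [hs_def, Real.sqrt_eq_rpow, ← Real.rpow_natCast, ← Real.rpow_mul (by linarith)]; norm_num
  have hA : N ^ β = a ^ 2 := by rw [ha_def, hpow]; norm_num
  have hN_eq : N = (y * a) ^ 2 := by
    rw [mul_pow, hy_def, ha_def, hpow, hpow, ← Real.rpow_add hN]; norm_num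
  have hNb : N ^ (1 / 2 + β) = y * a ^ 3 := by
    rw [ha_def, hpow, hy_def, ← Real.rpow_add hN]; ring_nf
  have hs8 : 8 < s := by nlinarith [Real.sqrt_nonneg m]
  have ha0 : 0 < a := Real.rpow_pos_of_pos hN _
  have hX0 : 0 < X := by nlinarith [Real.rpow_pos_of_pos hN β]
  have hB : m * normBound N m β = 2 * K * y * a ^ 3 / s := by
    rw [normBound, hNb, hm32, hm_eq, hK_def]; field_simp
  have hBX : m * normBound N m β / X < 4 * K * y * a * s := by
    rw [hB, div_lt_iff₀ hX0]
    calc 2 * K * y * a ^ 3 / s = 2 * K * y * a / s * a ^ 2 := by ring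
      _ < 2 * K * y * a / s * (2 * s ^ 2 * X) := by rw [← hA, ← hm_eq]; gcongr
      _ = 4 * K * y * a * s * X := by field_simp; ring
  have hsy : 2 * s ^ 2 < y := by rw [← hm_eq]; linarith
  have hya : y ≤ a ^ 2 := hA ▸ Real.rpow_le_rpow_of_exponent_le hN1 (by linarith)
  have hay : a ≤ y := Real.rpow_le_rpow_of_exponent_le hN1 (by linarith)
  have := cube_div_add_mul_lt_sq (K := K) rpow_three_quarters_lt hs8 ha0 hsy hya hay
  linarith

theorem second_vector_nonzero_third_coordinate_general
    (N m j minv t X : ℤ) (β : ℝ)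
    (hN : 0 < N) (hm : 0 < m) (hj1 : 1 ≤ j) (hjm : j ≤ m)
    (hgcdjm : Int.gcd j m = 1)
    (hβl : 1 / 3 ≤ β) (hβu : β ≤ 1 / 2)
    (hm72 : 72 < m) (hmupper : (m : ℝ) < (N : ℝ) ^ ((1 - β) / 2) / 2)
    (hminv : m * minv = 1 + t * N)
    (hX : X = ⌊(N : ℝ) ^ β / (m : ℝ)⌋) :
    (∀ v ∈ Submodule.span ℤ
        ({![N, 0, 0], ![j * minv, X, 0],
          ![(j * minv) ^ 2, 2 * (j * minv) * X, X ^ 2]} : Set (Fin 3 → ℤ)),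
      v 2 = 0 →
      Real.sqrt (∑ i, ((v i : ℤ) : ℝ) ^ 2) <
        2 * (3 : ℝ) ^ ((3 : ℝ) / 4) * (N : ℝ) ^ (1 / 2 + β) / (m : ℝ) ^ ((3 : ℝ) / 2) →
      ∃ k : ℤ, v = k • (![j, m * X, 0] : Fin 3 → ℤ)) ∧
    (∀ v ∈ Submodule.span ℤ
        ({![N, 0, 0], ![j * minv, X, 0],
          ![(j * minv) ^ 2, 2 * (j * minv) * X, X ^ 2]} : Set (Fin 3 → ℤ)),
      Real.sqrt (∑ i, ((v i : ℤ) : ℝ) ^ 2) <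
        2 * (3 : ℝ) ^ ((3 : ℝ) / 4) * (N : ℝ) ^ (1 / 2 + β) / (m : ℝ) ^ ((3 : ℝ) / 2) →
      LinearIndependent ℤ ![v, (![j, m * X, 0] : Fin 3 → ℤ)] →
      v 2 ≠ 0) := by
  have hm72' : (72 : ℝ) < m := by exact_mod_cast hm72
  have hN1 : (1 : ℝ) ≤ N :=
    one_le_of_one_lt_rpow (e := (1 - β) / 2) (by exact_mod_cast hN) (by linarith) (by linarith)
  have hmA : (m : ℝ) ≤ (N : ℝ) ^ β := by
    linarith [Real.rpow_le_rpow_of_exponent_le hN1 (by linarith : (1 - β) / 2 ≤ β)]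
  have hXA : (N : ℝ) ^ β < 2 * m * X := hX ▸ lt_two_mul_mul_floor_div (by linarith) hmA
  have hX0 : 0 < X := by
    have : (0 : ℝ) < X := by nlinarith [Real.rpow_pos_of_pos (by linarith : (0 : ℝ) < N) β]
    exact_mod_cast this
  have hmj : IsCoprime m j := by rwa [Int.isCoprime_iff_gcd_eq_one, Int.gcd_comm]
  have hj0 : 0 ≤ j := by omega
  have key := fun v hv hv2 hnorm ↦ exists_eq_smul_of_sqrt_sum_sq_lt hm hj0 hjm hmj hminv hX0
    (mul_normBound_add_div_lt hN1 hm72' hβl hβu hmupper hXA).le (v := v) hv hv2 hnorm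
  refine ⟨key, fun v hv hnorm hli hv2 ↦ ?_⟩
  obtain ⟨k, rfl⟩ := key v hv hv2 hnorm
  exact one_ne_zero (LinearIndependent.pair_iff.mp hli 1 (-k) (by simp)).1

/-- The second part of Lemma 4.4: in the rank-3 lattice generated by `(N,0,0)`,
`(p̃, X, 0)`, `(p̃², 2p̃X, X²)` with `p̃ = j·minv`, `X = ⌊N^β/m⌋`, every lattice vector with
zero third coordinate and Euclidean norm `< 2·3^{3/4}·N^{1/2+β}/m^{3/2}` is an integer
multiple of `v₀ = (j, mX, 0)`; in particular any lattice vector of norm below this bound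
that is linearly independent from `v₀` has nonzero third coordinate. -/
theorem second_vector_nonzero_third_coordinate
    (N m j minv t X : ℤ) (β : ℝ)
    (hN : 0 < N) (hm : 0 < m) (hj1 : 1 ≤ j) (hjm : j ≤ m)
    (hgcdjm : Int.gcd j m = 1) (hgcdmN : Int.gcd m N = 1)
    (hβl : 1 / 3 ≤ β) (hβu : β ≤ 1 / 2)
    (hm72 : 72 < m) (hmupper : (m : ℝ) < (N : ℝ) ^ ((1 - β) / 2) / 2)
    (hminv : m * minv = 1 + t * N)
    (hX : X = ⌊(N : ℝ) ^ β / (m : ℝ)⌋) :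
    (∀ v ∈ Submodule.span ℤ
        ({![N, 0, 0], ![j * minv, X, 0],
          ![(j * minv) ^ 2, 2 * (j * minv) * X, X ^ 2]} : Set (Fin 3 → ℤ)),
      v 2 = 0 →
      Real.sqrt (∑ i, ((v i : ℤ) : ℝ) ^ 2) <
        2 * (3 : ℝ) ^ ((3 : ℝ) / 4) * (N : ℝ) ^ (1 / 2 + β) / (m : ℝ) ^ ((3 : ℝ) / 2) →
      ∃ k : ℤ, v = k • (![j, m * X, 0] : Fin 3 → ℤ)) ∧
    (∀ v ∈ Submodule.span ℤ
        ({![N, 0, 0], ![j * minv, X, 0],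
          ![(j * minv) ^ 2, 2 * (j * minv) * X, X ^ 2]} : Set (Fin 3 → ℤ)),
      Real.sqrt (∑ i, ((v i : ℤ) : ℝ) ^ 2) <
        2 * (3 : ℝ) ^ ((3 : ℝ) / 4) * (N : ℝ) ^ (1 / 2 + β) / (m : ℝ) ^ ((3 : ℝ) / 2) →
      LinearIndependent ℤ ![v, (![j, m * X, 0] : Fin 3 → ℤ)] →
      v 2 ≠ 0) :=
  second_vector_nonzero_third_coordinate_general N m j minv t X β hN hm hj1 hjm hgcdjm hβl hβu hm72
    hmupper hminv hX
end

section
/- Let N = p·q with p prime, let m be a positive integer with gcd(m, N) = 1, and write p = m·x₀ + j with 0 ≤ j < m (so j = p mod m and x₀ = ⌊p/m⌋). Let minv be an integer with m·minv ≡ 1 (mod N), p̃ = j·minv, X a positive integer with |x₀| ≤ X, and let v = (c, bX, aX²) be any element of the lattice generated by (N,0,0), (p̃, X, 0), (p̃², 2p̃X, X²), where a, b, c ∈ ℤ. Then p divides c + b·x₀ + a·x₀², and writing c + b·x₀ + a·x₀² = i·p with i ∈ ℤ, we have (1) |i| ≤ √3·‖v‖/p, and (2) for every integer α with p ∤ α,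 the class of α raised to the integer power i·m² equals the class of α raised to the integer power c·m² + b·m·(1−j) + a·(1−j)² in (ℤ/pℤ)ˣ. -/
/-!
Each lattice vector `(c, bX, aX²)` encodes the polynomial `f = c + b·x + a·x²`, an integer
combination of `N`, `x + p̃` and `(x + p̃)²`. Since `m·(x₀ + p̃) ≡ m·x₀ + j = p ≡ 0 (mod p)` and
`m` is a unit mod `p`, `x₀ ≡ -p̃ (mod p)` is a root of `f` modulo `p`, so `f(x₀) = i·p`.
Because `|x₀| ≤ X`, `|i|·p = |f(x₀)|` is at most the ℓ¹-norm of `v`, hence at most `√3·‖v‖`.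
Finally `m²·f(x₀) = c·m² + b·m·(p - j) + a·(p - j)²`, and `p ≡ 1` modulo `p - 1`, the
exponent of `(ℤ/pℤ)ˣ`.
-/

open Submodule in
theorem dvd_eval_of_mem_span {R : Type*} [CommRing R] [IsDomain R] {N r X x d a b c : R}
    (hX : X ≠ 0) (hdN : d ∣ N) (hdr : d ∣ x + r)
    (hv : ![c, b * X, a * X ^ 2] ∈ span R
      ({![N, 0, 0], ![r, X, 0], ![r ^ 2, 2 * r * X, X ^ 2]} : Set (Fin 3 → R))) :
    d ∣ c + b * x + a * x ^ 2 := by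
  -- `v ↦ X²·f(x)` is linear in `v` and sends the generators to `X²·N`, `X²·(x + r)`, `X²·(x + r)²`.
  have hspan : ∀ v ∈ span R
      ({![N, 0, 0], ![r, X, 0], ![r ^ 2, 2 * r * X, X ^ 2]} : Set (Fin 3 → R)),
      X ^ 2 * d ∣ v ⬝ᵥ ![X ^ 2, X * x, x ^ 2] := by
    intro v hv
    induction hv using span_induction with
    | mem v hv =>
      rcases hv with rfl | rfl | rfl
      · refine (mul_dvd_mul_left (X ^ 2) hdN).trans (dvd_of_eq ?_)
        simp [dotProduct, Fin.sum_univ_three]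
        ring
      · refine (mul_dvd_mul_left (X ^ 2) hdr).trans (dvd_of_eq ?_)
        simp [dotProduct, Fin.sum_univ_three]
        ring
      · refine (mul_dvd_mul_left (X ^ 2) (hdr.mul_right (x + r))).trans (dvd_of_eq ?_)
        simp [dotProduct, Fin.sum_univ_three]
        ring
    | zero => simp
    | add v w _ _ hv hw => rw [add_dotProduct]; exact dvd_add hv hw
    | smul n v _ hv => rw [smul_dotProduct, smul_eq_mul]; exact hv.mul_left n
  have h := hspan _ hv
  rwa [show ![c, b * X, a * X ^ 2] ⬝ᵥ ![X ^ 2, X * x, x ^ 2] = X ^ 2 * (c + b * x + a * x ^ 2) by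
    simp [dotProduct, Fin.sum_univ_three]; ring, mul_dvd_mul_iff_left (pow_ne_zero 2 hX)] at h

theorem dvd_add_mul_inv_of_eq_mul_add {p m j x₀ minv : ℤ} (hcop : IsCoprime p m)
    (hminv : p ∣ m * minv - 1) (hpd : p = m * x₀ + j) : p ∣ x₀ + j * minv := by
  refine hcop.dvd_of_dvd_mul_left ?_
  have hsum : m * (x₀ + j * minv) = p + j * (m * minv - 1) := by rw [hpd]; ring
  exact hsum ▸ dvd_add dvd_rfl (hminv.mul_left j)

theorem Real.abs_add_add_le_sqrt_three_mul (u v w : ℝ) :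
    |u + v + w| ≤ √3 * √(u ^ 2 + v ^ 2 + w ^ 2) := by
  rw [← Real.sqrt_mul zero_le_three]
  exact Real.abs_le_sqrt (by nlinarith [sq_nonneg (u - v), sq_nonneg (v - w), sq_nonneg (u - w)])

theorem abs_quadratic_le_sqrt_three_mul {a b c x X : ℝ} (hx : |x| ≤ X) :
    |c + b * x + a * x ^ 2| ≤ √3 * √(c ^ 2 + (b * X) ^ 2 + (a * X ^ 2) ^ 2) := by
  have hX : 0 ≤ X := (abs_nonneg x).trans hx
  calc |c + b * x + a * x ^ 2| ≤ |c| + |b * X| + |a * X ^ 2| := by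
        rw [abs_mul b X, abs_mul a (X ^ 2), abs_of_nonneg hX, abs_of_nonneg (pow_nonneg hX 2)]
        refine (abs_add_three _ _ _).trans ?_
        rw [abs_mul, abs_mul, abs_pow]
        gcongr
    _ ≤ √3 * √(|c| ^ 2 + |b * X| ^ 2 + |a * X ^ 2| ^ 2) :=
        (le_abs_self _).trans (Real.abs_add_add_le_sqrt_three_mul _ _ _)
    _ = √3 * √(c ^ 2 + (b * X) ^ 2 + (a * X ^ 2) ^ 2) := by simp only [sq_abs]

theorem ZMod.units_zpow_eq_of_modEq {p : ℕ} [Fact p.Prime] (u : (ZMod p)ˣ) {k l : ℤ}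
    (h : k ≡ l [ZMOD (p : ℤ) - 1]) : u ^ k = u ^ l := by
  have hord := Int.natCast_dvd_natCast.2 (ZMod.orderOf_units_dvd_card_sub_one u)
  rw [Nat.cast_sub (Fact.out : p.Prime).one_le, Nat.cast_one] at hord
  exact zpow_eq_zpow_iff_modEq.2 (h.of_dvd hord)

theorem exponent_modEq_of_eval_eq {p m j x₀ a b c i : ℤ} (hi : c + b * x₀ + a * x₀ ^ 2 = i * p)
    (hpd : p = m * x₀ + j) :
    i * m ^ 2 ≡ c * m ^ 2 + b * m * (1 - j) + a * (1 - j) ^ 2 [ZMOD p - 1] :=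
  (Int.modEq_iff_dvd.2 ⟨b * m + a * (p + 1 - 2 * j) - i * m ^ 2, by
    linear_combination (-m ^ 2) * hi - (b * m + a * (m * x₀ + p - j)) * hpd⟩).symm

theorem giant_step_collision_general
    (p : ℕ) (hp : p.Prime) (N q m j x₀ minv X a b c : ℤ)
    (hN : N = (p : ℤ) * q) (hgcd : Int.gcd m N = 1)
    (hpd : (p : ℤ) = m * x₀ + j)
    (hminv : N ∣ m * minv - 1) (hX : 0 < X) (hx₀ : |x₀| ≤ X)
    (hv : (![c, b * X, a * X ^ 2] : Fin 3 → ℤ) ∈ Submodule.span ℤ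
          ({![N, 0, 0], ![j * minv, X, 0],
            ![(j * minv) ^ 2, 2 * (j * minv) * X, X ^ 2]} : Set (Fin 3 → ℤ))) :
    (p : ℤ) ∣ c + b * x₀ + a * x₀ ^ 2 ∧
    ∀ i : ℤ, c + b * x₀ + a * x₀ ^ 2 = i * (p : ℤ) →
      (|(i : ℝ)| ≤ Real.sqrt 3 *
          Real.sqrt (((c : ℤ) : ℝ) ^ 2 + ((b * X : ℤ) : ℝ) ^ 2 + ((a * X ^ 2 : ℤ) : ℝ) ^ 2)
          / (p : ℝ)) ∧
      ∀ α : ℤ, ¬ (p : ℤ) ∣ α →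
        ∀ u : (ZMod p)ˣ, (u : ZMod p) = (α : ZMod p) →
          u ^ (i * m ^ 2) = u ^ (c * m ^ 2 + b * m * (1 - j) + a * (1 - j) ^ 2) := by
  have hpN : (p : ℤ) ∣ N := ⟨q, hN⟩
  have hcop : IsCoprime (p : ℤ) m :=
    ((Int.isCoprime_iff_gcd_eq_one.mpr hgcd).of_isCoprime_of_dvd_right hpN).symm
  have hroot : (p : ℤ) ∣ x₀ + j * minv :=
    dvd_add_mul_inv_of_eq_mul_add hcop (hpN.trans hminv) hpd
  refine ⟨dvd_eval_of_mem_span hX.ne' hpN hroot hv, fun i hi => ⟨?_, fun _ _ u _ => ?_⟩⟩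
  · rw [le_div_iff₀ (by exact_mod_cast hp.pos)]
    have hiR : (c : ℝ) + b * x₀ + a * x₀ ^ 2 = i * p := by exact_mod_cast hi
    calc |(i : ℝ)| * p = |(c : ℝ) + b * x₀ + a * x₀ ^ 2| := by
          rw [hiR, abs_mul, Nat.abs_cast]
      _ ≤ _ := abs_quadratic_le_sqrt_three_mul (x := (x₀ : ℝ)) (X := X)
          (by rw [← Int.cast_abs]; exact_mod_cast hx₀)
      _ = _ := by push_cast; rfl
  · have := Fact.mk hp
    exact ZMod.units_zpow_eq_of_modEq u (exponent_modEq_of_eval_eq hi hpd)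

/-- The key property of giant steps from a rank-3 lattice vector: if `N = p·q` with `p`
prime, `gcd(m,N) = 1`, `p = m·x₀ + j` with `0 ≤ j < m`, `m·minv ≡ 1 (mod N)`, `|x₀| ≤ X`
with `X > 0`, and `v = (c, bX, aX²)` is a lattice vector, then `p ∣ c + b·x₀ + a·x₀²`;
writing this value as `i·p`, one has `|i| ≤ √3·‖v‖/p`, and for any `α` with `p ∤ α` the
class of `α` raised to `i·m²` equals the class of `α` raised to
`c·m² + b·m·(1−j) + a·(1−j)²` in `(ℤ/pℤ)ˣ`. -/
theorem giant_step_collision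
    (p : ℕ) (hp : p.Prime) (N q m j x₀ minv X a b c : ℤ)
    (hN : N = (p : ℤ) * q) (hm : 0 < m) (hgcd : Int.gcd m N = 1)
    (hj0 : 0 ≤ j) (hjm : j < m) (hpd : (p : ℤ) = m * x₀ + j)
    (hminv : N ∣ m * minv - 1) (hX : 0 < X) (hx₀ : |x₀| ≤ X)
    (hv : (![c, b * X, a * X ^ 2] : Fin 3 → ℤ) ∈ Submodule.span ℤ
          ({![N, 0, 0], ![j * minv, X, 0],
            ![(j * minv) ^ 2, 2 * (j * minv) * X, X ^ 2]} : Set (Fin 3 → ℤ))) :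
    (p : ℤ) ∣ c + b * x₀ + a * x₀ ^ 2 ∧
    ∀ i : ℤ, c + b * x₀ + a * x₀ ^ 2 = i * (p : ℤ) →
      (|(i : ℝ)| ≤ Real.sqrt 3 *
          Real.sqrt (((c : ℤ) : ℝ) ^ 2 + ((b * X : ℤ) : ℝ) ^ 2 + ((a * X ^ 2 : ℤ) : ℝ) ^ 2)
          / (p : ℝ)) ∧
      ∀ α : ℤ, ¬ (p : ℤ) ∣ α →
        ∀ u : (ZMod p)ˣ, (u : ZMod p) = (α : ZMod p) →
          u ^ (i * m ^ 2) = u ^ (c * m ^ 2 + b * m * (1 - j) + a * (1 - j) ^ 2) :=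
  giant_step_collision_general p hp N q m j x₀ minv X a b c hN hgcd hpd hminv hX hx₀ hv
end

section
/- There exist constants c₁, c₂ > 0 and x₀ ∈ ℕ such that for every integer x ≥ x₀ there exists a squarefree positive integer m (a product of distinct primes) satisfying x/2 < m < 2x and c₁/log log x ≤ φ(m)/m ≤ c₂/log log x, where φ is Euler's totient function. -/
open Finset Real
open scoped Nat

/-!
Write `F n = ∏_{p ≤ n} (1 - 1/p) = φ(n#)/n#` (`mertensProduct n`) and `ℓ = log x`. Since `F`
drops by at most a factor `2` per step and `F n ≤ 1 / log (n + 1)` (the Euler product dominates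
the harmonic sum), the first `K` with `F K ≤ 2 / log ℓ` has `F K > 1 / log ℓ` and `K ≤ √ℓ + 1`,
so `K# ≤ 4 ^ K` is tiny compared with `x`. Bertrand's postulate gives a prime
`q ∈ (x / (2 K#), x / K#]`, and `m = K# q` works because `φ(m)/m = F K · (1 - 1/q)` with
`1/2 ≤ 1 - 1/q < 1`.
-/

noncomputable def mertensProduct (n : ℕ) : ℝ := ∏ p ∈ Nat.primesLE n, (1 - (p : ℝ)⁻¹)

lemma one_half_le_one_sub_inv_prime {p : ℕ} (hp : p.Prime) : 1 / 2 ≤ 1 - (p : ℝ)⁻¹ := by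
  have := inv_anti₀ two_pos (show (2 : ℝ) ≤ p from mod_cast hp.two_le)
  linarith

lemma one_sub_inv_prime_lt_one {p : ℕ} (hp : p.Prime) : 1 - (p : ℝ)⁻¹ < 1 := by
  have : (0 : ℝ) < (p : ℝ)⁻¹ := inv_pos.mpr (mod_cast hp.pos)
  linarith

@[simp] lemma mertensProduct_zero : mertensProduct 0 = 1 := by simp [mertensProduct]

lemma mertensProduct_pos (n : ℕ) : 0 < mertensProduct n :=
  prod_pos fun p hp => by linarith [one_half_le_one_sub_inv_prime (Nat.prime_of_mem_primesLE hp)]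

lemma half_mertensProduct_le_succ (n : ℕ) : mertensProduct n / 2 ≤ mertensProduct (n + 1) := by
  rw [mertensProduct.eq_def (n + 1), Nat.primesLE_succ]
  split_ifs with hp
  · rw [prod_insert fun h => (Nat.le_of_mem_primesLE h).not_gt n.lt_succ_self, ← mertensProduct]
    nlinarith [one_half_le_one_sub_inv_prime hp, mertensProduct_pos n]
  · exact half_le_self (mertensProduct_pos n).le

/-- Every `n ≤ N` is `(N+1)`-smooth, so the Euler product over `p ≤ N` dominates `∑_{n ≤ N} 1/n`. -/
lemma log_succ_le_prod_primesLE_inv (N : ℕ) :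
    log (N + 1) ≤ ∏ p ∈ Nat.primesLE N, (1 - (p : ℝ)⁻¹)⁻¹ := by
  let f : ℕ →* ℝ := invMonoidHom.comp (Nat.castRingHom ℝ : ℕ →* ℝ)
  have hf : ∀ {p : ℕ}, p.Prime → ‖f p‖ < 1 := fun {p} hp => by
    have h1 : (1 : ℝ) < p := mod_cast hp.one_lt
    simpa [f, abs_inv] using inv_lt_one_of_one_lt₀ h1
  have hsum := (EulerProduct.summable_and_hasSum_smoothNumbers_prod_primesBelow_geometric hf
    (N + 1)).2
  replace hsum := (hasSum_subtype_iff_indicator (f := fun n : ℕ => f n)).mp hsum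
  calc log (N + 1) ≤ (harmonic N : ℝ) := mod_cast log_add_one_le_harmonic N
    _ = ∑ n ∈ Icc 1 N, (N + 1).smoothNumbers.indicator (fun n => f n) n := by
      rw [harmonic_eq_sum_Icc]
      push_cast
      refine sum_congr rfl fun n hn => ?_
      rw [mem_Icc] at hn
      rw [Set.indicator_of_mem (Nat.mem_smoothNumbers_of_lt (by omega) (by omega))]
      simp [f]
    _ ≤ _ := sum_le_hasSum _ (fun n _ => Set.indicator_nonneg (fun n _ => by simp [f]) n) hsum

lemma log_succ_mul_mertensProduct_le_one (N : ℕ) : log (N + 1) * mertensProduct N ≤ 1 := by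
  have := log_succ_le_prod_primesLE_inv N
  rw [prod_inv_distrib, ← mertensProduct] at this
  exact (le_div_iff₀ (mertensProduct_pos N)).mp (by rwa [one_div])

lemma exists_half_lt_and_le_of_half_le_succ {u : ℕ → ℝ} {a : ℝ} (h0 : a < u 0)
    (hstep : ∀ n, u n / 2 ≤ u (n + 1)) {N : ℕ} (hN : u N ≤ a) :
    ∃ n ≤ N, a / 2 < u n ∧ u n ≤ a := by
  classical
  have hex : ∃ n, u n ≤ a := ⟨N, hN⟩
  refine ⟨Nat.find hex, Nat.find_min' hex hN, ?_, Nat.find_spec hex⟩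
  obtain ⟨k, hk⟩ : ∃ k, Nat.find hex = k + 1 :=
    Nat.exists_eq_succ_of_ne_zero fun h => h0.not_ge (h ▸ Nat.find_spec hex)
  have hk' : a < u k := not_le.mp (Nat.find_min hex (by omega))
  rw [hk]
  linarith [hstep k]

lemma exists_mertensProduct_mem_Ioc {ℓ : ℝ} (hℓ : 36 ≤ ℓ) :
    ∃ K : ℕ, 3 * ((K + 1 : ℕ) : ℝ) ≤ ℓ ∧ mertensProduct K ∈ Set.Ioc (1 / log ℓ) (2 / log ℓ) := by
  set r := √ℓ
  have hr : 6 ≤ r := by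
    rw [show (6 : ℝ) = √36 by rw [show (36 : ℝ) = 6 ^ 2 by norm_num, sqrt_sq (by norm_num)]]
    exact sqrt_le_sqrt hℓ
  have hrℓ : r ^ 2 = ℓ := sq_sqrt (by linarith)
  have hL : log ℓ = 2 * log r := by rw [← hrℓ, Real.log_pow]; norm_num
  have hlogr : 1 < log r := by rw [lt_log_iff_exp_lt (by linarith)]; linarith [exp_one_lt_d9]
  set N := ⌈r⌉₊
  have hN : mertensProduct N ≤ 2 / log ℓ := by
    have h1 : log r ≤ log (N + 1) := log_le_log (by linarith) (by linarith [Nat.le_ceil r])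
    have h2 := log_succ_mul_mertensProduct_le_one N
    rw [hL, le_div_iff₀ (by positivity)]
    nlinarith [mertensProduct_pos N]
  obtain ⟨K, hKN, hlow, hup⟩ := exists_half_lt_and_le_of_half_le_succ (u := mertensProduct)
    (by rw [mertensProduct_zero, hL, div_lt_one (by positivity)]; linarith)
    half_mertensProduct_le_succ hN
  have hK : (K : ℝ) < r + 1 := (Nat.cast_le.mpr hKN).trans_lt (Nat.ceil_lt_add_one (by linarith))
  refine ⟨K, ?_, by rwa [div_div, div_mul_cancel_right₀ two_ne_zero, ← one_div] at hlow, hup⟩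
  push_cast
  nlinarith

lemma totient_div_self_eq_prod_primeFactors {n : ℕ} (hn : n ≠ 0) :
    (φ n : ℝ) / n = ∏ p ∈ n.primeFactors, (1 - (p : ℝ)⁻¹) := by
  have h := congrArg (fun r : ℚ => (r : ℝ)) (Nat.totient_eq_mul_prod_factors n)
  push_cast at h
  rw [h, mul_div_cancel_left₀ _ (Nat.cast_ne_zero.mpr hn)]

lemma totient_primorial_mul_prime_div {n q : ℕ} (hq : q.Prime) (hnq : n < q) :
    (φ (primorial n * q) : ℝ) / (primorial n * q : ℕ) = mertensProduct n * (1 - (q : ℝ)⁻¹) := by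
  have hq_not_mem : q ∉ Nat.primesLE n := fun h => (Nat.le_of_mem_primesLE h).not_gt hnq
  rw [totient_div_self_eq_prod_primeFactors (mul_ne_zero (primorial_ne_zero n) hq.ne_zero),
    Nat.primeFactors_mul (primorial_ne_zero n) hq.ne_zero, primeFactors_primorial, hq.primeFactors,
    prod_union (disjoint_singleton_right.mpr hq_not_mem), prod_singleton, mertensProduct]

lemma squarefree_primorial_mul_prime {n q : ℕ} (hq : q.Prime) (hnq : n < q) :
    Squarefree (primorial n * q) := by
  have hcop : Nat.Coprime (primorial n) q :=
    (hq.coprime_iff_not_dvd.mpr fun h => (hq.dvd_primorial_iff.mp h).not_gt hnq).symm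
  exact (Nat.squarefree_mul hcop).mpr ⟨squarefree_primorial n, hq.squarefree⟩

lemma two_mul_succ_mul_primorial_le (n : ℕ) : 2 * (n + 1) * primorial n ≤ 8 ^ (n + 1) := by
  calc 2 * (n + 1) * primorial n ≤ 2 ^ (n + 1) * 4 ^ (n + 1) := by
        gcongr
        · rw [pow_succ']; gcongr; exact n.lt_two_pow_self
        · exact (primorial_le_four_pow n).trans (pow_le_pow_right₀ (by norm_num) n.le_succ)
    _ = 8 ^ (n + 1) := by rw [← mul_pow]; norm_num

lemma eight_pow_le_exp {k : ℕ} {y : ℝ} (h : 3 * (k : ℝ) ≤ y) : (8 : ℝ) ^ k ≤ exp y := by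
  have h8 : (8 : ℝ) ≤ exp 3 := by
    have : (2.7 : ℝ) ^ 3 ≤ exp 1 ^ 3 := by gcongr; linarith [exp_one_gt_d9]
    rw [← exp_nat_mul] at this
    norm_num at this
    linarith
  calc (8 : ℝ) ^ k ≤ exp 3 ^ k := by gcongr
    _ = exp (3 * k) := by rw [← exp_nat_mul]; ring_nf
    _ ≤ exp y := exp_le_exp.mpr h

/-- Bertrand's postulate between `x / (2d)` and `x / d`. -/
lemma exists_prime_gt_and_half_lt_mul_le {d k x : ℕ} (hd : 0 < d) (h : 2 * (k + 1) * d ≤ x) :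
    ∃ q, q.Prime ∧ k < q ∧ x < 2 * (d * q) ∧ d * q ≤ x := by
  set n₀ := x / (2 * d)
  have hk : k + 1 ≤ n₀ := (Nat.le_div_iff_mul_le (by omega)).mpr (by linarith)
  obtain ⟨q, hq, hn₀q, hq2⟩ := Nat.exists_prime_lt_and_le_two_mul n₀ (by omega)
  refine ⟨q, hq, by omega, ?_, ?_⟩
  · calc x < 2 * d * (n₀ + 1) := Nat.lt_mul_div_succ x (by omega)
      _ ≤ 2 * d * q := by gcongr; omega
      _ = 2 * (d * q) := by ring
  · calc d * q ≤ d * (2 * n₀) := by gcongr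
      _ = 2 * d * n₀ := by ring
      _ ≤ x := Nat.mul_div_le x (2 * d)

/-- Lemma 2.7 (existence form): there are constants `c₁, c₂ > 0` such that for all
sufficiently large `x`, there is a squarefree positive integer `m` with `x/2 < m < 2x`
and `c₁/log log x ≤ φ(m)/m ≤ c₂/log log x`. -/
theorem exists_smooth_modulus :
    ∃ c₁ c₂ : ℝ, 0 < c₁ ∧ 0 < c₂ ∧ ∃ x₀ : ℕ, ∀ x : ℕ, x₀ ≤ x →
      ∃ m : ℕ, 0 < m ∧ Squarefree m ∧
        (x : ℝ) / 2 < (m : ℝ) ∧ (m : ℝ) < 2 * (x : ℝ) ∧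
        c₁ / Real.log (Real.log x) ≤ (Nat.totient m : ℝ) / (m : ℝ) ∧
        (Nat.totient m : ℝ) / (m : ℝ) ≤ c₂ / Real.log (Real.log x) := by
  refine ⟨1 / 2, 2, by norm_num, by norm_num, ⌈exp 36⌉₊, fun x hx => ?_⟩
  have hx36 : exp 36 ≤ x := (Nat.le_ceil _).trans (mod_cast hx)
  have hx0 : (0 : ℝ) < x := (exp_pos 36).trans_le hx36
  obtain ⟨K, hKx, hlow, hup⟩ := exists_mertensProduct_mem_Ioc ((le_log_iff_exp_le hx0).mpr hx36)
  have hsize : 2 * (K + 1) * primorial K ≤ x := by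
    have := eight_pow_le_exp hKx
    rw [exp_log hx0] at this
    exact_mod_cast (two_mul_succ_mul_primorial_le K).trans (by exact_mod_cast this)
  obtain ⟨q, hq, hKq, hxm, hmx⟩ := exists_prime_gt_and_half_lt_mul_le (primorial_pos K) hsize
  refine ⟨primorial K * q, mul_pos (primorial_pos K) hq.pos,
    squarefree_primorial_mul_prime hq hKq, ?_, ?_, ?_, ?_⟩
  · have : (x : ℝ) < 2 * (primorial K * q : ℕ) := by exact_mod_cast hxm
    linarith
  · have : ((primorial K * q : ℕ) : ℝ) ≤ x := by exact_mod_cast hmx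
    linarith
  · rw [totient_primorial_mul_prime_div hq hKq]
    calc 1 / 2 / log (log x) = 1 / log (log x) * (1 / 2) := by ring
      _ ≤ mertensProduct K * (1 - (q : ℝ)⁻¹) :=
        mul_le_mul hlow.le (one_half_le_one_sub_inv_prime hq) (by norm_num)
          (mertensProduct_pos K).le
  · rw [totient_primorial_mul_prime_div hq hKq]
    exact (mul_le_of_le_one_right (mertensProduct_pos K).le
      (one_sub_inv_prime_lt_one hq).le).trans hup
end
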